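/- Correctness of Blelloch's parallel scan: let (M, ⊗, e) be a monoid, n ∈ ℕ, T = 2ⁿ, and a : {1, …, T} → M (1-indexed). First perform the up-sweep: u_0 = a and, for d = 0, …, n−1, u_{d+1}(k) = u_d(k − 2^d) ⊗ u_d(k) if 2^{d+1} divides k, else u_{d+1}(k) = u_d(k). Then set w_n(k) = u_n(k) for k < T and w_n(T) = e, and perform the down-sweep: for d = n−1 down to 0, for each k that is a multiple of 2^{d+1} with j = k − 2^d, simultaneously set w_d(j) = w_{d+1}(k) and w_d(k) = w_{d+1}(k) ⊗ w_{d+1}(j), leaving all other positions unchanged. Then w_0(1) = e and w_0(k) = a(1) ⊗ ⋯ ⊗ a(k−1) for 2 ≤ k ≤ T (the exclusive scan), and consequently the final pass values w_0(k) ⊗ a(k) equal the inclusive all-prefix-sums a(1) ⊗ ⋯ ⊗ a(k) for every k. -/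

import Mathlib

/-- `seqProd a s j = a s * a (s+1) * ⋯ * a (s+j)`. -/
def seqProd {M : Type*} [Monoid M] (a : ℕ → M) (s : ℕ) : ℕ → M
  | 0 => a s
  | j + 1 => seqProd a s j * a (s + j + 1)

/-- One level of the up-sweep: position `k` becomes `u (k - 2^d) * u k` if `2^(d+1)`
divides `k`, and is left unchanged otherwise. -/
def upStep {M : Type*} [Monoid M] (d : ℕ) (u : ℕ → M) : ℕ → M :=
  fun k => if 2 ^ (d + 1) ∣ k then u (k - 2 ^ d) * u k else u k

/-- `upIter a d`: the (1-indexed) array after `d` levels of the up-sweep. -/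
def upIter {M : Type*} [Monoid M] (a : ℕ → M) : ℕ → ℕ → M
  | 0 => a
  | d + 1 => upStep d (upIter a d)

/-- Zero the last element: `w_n(k) = u_n(k)` for `k ≠ T` and `w_n(T) = e`. -/
def blInit {M : Type*} [Monoid M] (T : ℕ) (u : ℕ → M) : ℕ → M :=
  fun k => if k = T then 1 else u k

/-- One level of Blelloch's down-sweep: for each `k` that is a multiple of `2^(d+1)`,
with `j = k - 2^d`, simultaneously set `w'(j) = w(k)` and `w'(k) = w(k) * w(j)`,
leaving all other positions unchanged.  Written as a function of the position `p`:
if `2^(d+1) ∣ p + 2^d` (i.e. `p = j`) then `w'(p) = w (p + 2^d)`; else if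
`2^(d+1) ∣ p` (i.e. `p = k`) then `w'(p) = w p * w (p - 2^d)`; else `w'(p) = w p`. -/
def blStep {M : Type*} [Monoid M] (d : ℕ) (w : ℕ → M) : ℕ → M :=
  fun p =>
    if 2 ^ (d + 1) ∣ (p + 2 ^ d) then w (p + 2 ^ d)
    else if 2 ^ (d + 1) ∣ p then w p * w (p - 2 ^ d)
    else w p

/-- The down-sweep, running levels `d = n-1` down to `0` starting from `w`. -/
def blDown {M : Type*} [Monoid M] (n : ℕ) (w : ℕ → M) : ℕ → ℕ → M
  | 0 => w
  | j + 1 => blStep (n - j - 1) (blDown n w j)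

/-- The final array `w_0` of Blelloch's scan on the 1-indexed input `a` of length
`T = 2^n`: up-sweep, zero the last element, then down-sweep through all `n` levels. -/
def blFinal {M : Type*} [Monoid M] (n : ℕ) (a : ℕ → M) : ℕ → M :=
  blDown n (blInit (2 ^ n) (upIter a n)) n

/-!
A position `k` with `2^e ∣ k` but `2^(e+1) ∤ k` receives at up-sweep level `e` the product of
the block of length `2^e` ending at `k`, and is untouched by the later levels.
The down-sweep maintains the invariant that, once the levels down to `d` are processed, every
position `p` divisible by `2^d` holds the product of all entries before the block of length
`2^d` ending at `p`, and every other position still holds its up-sweep value. A left child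
copies the prefix of its right sibling, which is exactly its own prefix; a right child
multiplies its prefix by the left sibling's block. At `d = 0` this is the exclusive scan.
-/

section Blelloch

variable {M : Type*} [Monoid M] (a : ℕ → M)

/-- The product `a s * a (s + 1) * ⋯ * a (s + L - 1)` of `L` consecutive entries. -/
def intervalProd (s L : ℕ) : M :=
  ((List.range' s L).map a).prod

@[simp]
theorem intervalProd_zero (s : ℕ) : intervalProd a s 0 = 1 := rfl

theorem intervalProd_add (s m L : ℕ) :
    intervalProd a s (m + L) = intervalProd a s m * intervalProd a (s + m) L := by
  simp only [intervalProd, ← List.range'_append, one_mul, List.map_append, List.prod_append]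

theorem intervalProd_succ (s L : ℕ) :
    intervalProd a s (L + 1) = intervalProd a s L * a (s + L) := by
  rw [intervalProd_add]
  simp [intervalProd]

theorem seqProd_eq_intervalProd (s : ℕ) : ∀ j, seqProd a s j = intervalProd a s (j + 1)
  | 0 => by simp [seqProd, intervalProd]
  | j + 1 => by
    rw [seqProd, seqProd_eq_intervalProd s j, intervalProd_succ (L := j + 1), Nat.add_assoc]

theorem upIter_eq_intervalProd (d : ℕ) {k : ℕ} (hk : 0 < k) (hdvd : 2 ^ d ∣ k) :
    upIter a d k = intervalProd a (k + 1 - 2 ^ d) (2 ^ d) := by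
  induction d generalizing k with
  | zero => simp [upIter, intervalProd]
  | succ d ih =>
    have hk' : 2 ^ (d + 1) ≤ k := Nat.le_of_dvd hk hdvd
    have hdvd' : 2 ^ d ∣ k := (pow_dvd_pow 2 d.le_succ).trans hdvd
    rw [Nat.two_pow_succ] at hk' ⊢
    rw [upIter, upStep, if_pos hdvd, ih (by omega) (Nat.dvd_sub hdvd' dvd_rfl), ih hk hdvd',
      intervalProd_add]
    congr 2 <;> omega

theorem upIter_of_not_dvd {e k : ℕ} (hk : ¬ 2 ^ (e + 1) ∣ k) {d : ℕ} (hed : e ≤ d) :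
    upIter a d k = upIter a e k := by
  induction d, hed using Nat.le_induction with
  | base => rfl
  | succ d hed ih =>
    have hk' : ¬ 2 ^ (d + 1) ∣ k := fun h => hk ((pow_dvd_pow 2 (by omega)).trans h)
    rw [upIter, upStep, if_neg hk', ih]

theorem two_pow_succ_dvd_or_of_two_pow_dvd {d p : ℕ} (h : 2 ^ d ∣ p) :
    2 ^ (d + 1) ∣ p ∨ 2 ^ (d + 1) ∣ p + 2 ^ d := by
  obtain ⟨q, rfl⟩ := h
  obtain ⟨t, rfl | rfl⟩ := Nat.even_or_odd' q
  · exact .inl ⟨t, by ring⟩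
  · exact .inr ⟨t + 1, by ring⟩

/-- The state of the array once the down-sweep has processed the levels `n - 1, …, d`. -/
def DownSweepInvariant (n d : ℕ) (w : ℕ → M) : Prop :=
  ∀ p, 0 < p → p ≤ 2 ^ n →
    w p = if 2 ^ d ∣ p then intervalProd a 1 (p - 2 ^ d) else upIter a n p

variable {a}

theorem downSweepInvariant_blInit (n : ℕ) :
    DownSweepInvariant a n n (blInit (2 ^ n) (upIter a n)) := by
  intro p hp hpn
  by_cases hT : p = 2 ^ n
  · simp [blInit, hT]
  · have hndvd : ¬ 2 ^ n ∣ p := fun h => hT (le_antisymm hpn (Nat.le_of_dvd hp h))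
    simp [blInit, hT, hndvd]

theorem DownSweepInvariant.blStep {n d : ℕ} {w : ℕ → M} (hd : d < n)
    (hw : DownSweepInvariant a n (d + 1) w) : DownSweepInvariant a n d (blStep d w) := by
  intro p hp hpn
  have hsucc := Nat.two_pow_succ d
  have hpos : 0 < 2 ^ d := by positivity
  by_cases hleft : 2 ^ (d + 1) ∣ p + 2 ^ d
  · have hdvd : 2 ^ d ∣ p := (Nat.dvd_add_left dvd_rfl).mp ((pow_dvd_pow 2 d.le_succ).trans hleft)
    -- `p + 2^d` is a multiple of `2^(d+1)` at most `2^n + 2^d`, hence at most `2^n`.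
    have hle : p + 2 ^ d ≤ 2 ^ n := by
      by_contra! hgt
      have hdvd_sub := Nat.dvd_sub hleft (pow_dvd_pow 2 hd)
      have := Nat.le_of_dvd (by omega) hdvd_sub
      omega
    rw [_root_.blStep, if_pos hleft, if_pos hdvd, hw _ (by omega) hle, if_pos hleft]
    congr 1
    omega
  by_cases hright : 2 ^ (d + 1) ∣ p
  · have hdvd : 2 ^ d ∣ p := (pow_dvd_pow 2 d.le_succ).trans hright
    have hp' : 2 ^ (d + 1) ≤ p := Nat.le_of_dvd hp hright
    have hsib : ¬ 2 ^ (d + 1) ∣ p - 2 ^ d := fun h => by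
      have := Nat.le_of_dvd (by omega) (Nat.dvd_sub hright h)
      omega
    rw [_root_.blStep, if_neg hleft, if_pos hright, if_pos hdvd, hw p hp hpn, if_pos hright,
      hw _ (by omega) (by omega), if_neg hsib, upIter_of_not_dvd a hsib hd.le,
      upIter_eq_intervalProd a d (by omega) (Nat.dvd_sub hdvd dvd_rfl)]
    conv_rhs => rw [show p - 2 ^ d = p - 2 ^ (d + 1) + 2 ^ d by omega, intervalProd_add]
    congr 2
    omega
  · have hdvd : ¬ 2 ^ d ∣ p := fun h => (two_pow_succ_dvd_or_of_two_pow_dvd h).elim hright hleft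
    rw [_root_.blStep, if_neg hleft, if_neg hright, if_neg hdvd, hw p hp hpn, if_neg hright]

theorem downSweepInvariant_blDown {n : ℕ} {w : ℕ → M} (hw : DownSweepInvariant a n n w) :
    ∀ j ≤ n, DownSweepInvariant a n (n - j) (blDown n w j)
  | 0, _ => hw
  | j + 1, hj => by
    have h := downSweepInvariant_blDown hw j (by omega)
    rw [show n - j = n - j - 1 + 1 by omega] at h
    exact h.blStep (by omega)

theorem blFinal_eq_intervalProd {n k : ℕ} (hk : 0 < k) (hkn : k ≤ 2 ^ n) :
    blFinal n a k = intervalProd a 1 (k - 1) := by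
  have := downSweepInvariant_blDown (downSweepInvariant_blInit (a := a) n) n le_rfl k hk hkn
  rw [blFinal]
  simpa using this

end Blelloch

/-- Correctness of Blelloch's parallel scan on a 1-indexed input of length `T = 2^n`
over a monoid: the final array is the exclusive scan, `w_0(1) = e` and
`w_0(k) = a 1 * ⋯ * a (k-1)` for `2 ≤ k ≤ T`; consequently the final pass values
`w_0(k) * a k` are the inclusive all-prefix-sums `a 1 * ⋯ * a k` for all `1 ≤ k ≤ T`. -/
theorem blelloch_correct {M : Type*} [Monoid M] (n : ℕ) (a : ℕ → M) :
    blFinal n a 1 = 1 ∧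
    (∀ k, 2 ≤ k → k ≤ 2 ^ n → blFinal n a k = seqProd a 1 (k - 2)) ∧
    (∀ k, 1 ≤ k → k ≤ 2 ^ n → blFinal n a k * a k = seqProd a 1 (k - 1)) := by
  refine ⟨?_, fun k hk hkn => ?_, fun k hk hkn => ?_⟩
  · simpa using blFinal_eq_intervalProd (a := a) one_pos Nat.one_le_two_pow
  · rw [blFinal_eq_intervalProd (by omega) hkn, seqProd_eq_intervalProd]
    congr 1
    omega
  · rw [blFinal_eq_intervalProd hk hkn, seqProd_eq_intervalProd, intervalProd_succ,
      Nat.add_sub_cancel' hk]
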